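/- arXiv:2002.06584 — 6 statements merged into one kernel-verified Lean document; each statement's English description precedes it below -/
import Mathlib

section
/- For every integer b ≥ 2 and every integer k ≥ 1, the real square root of f_b(2k−1) satisfies √(f_b(2k−1)) = (b^k/(b−1)) · √(1 − ((2k−1)(b−1)+b)/b^(2k)). -/
/-- The recurrence `f_b(0) = 0`, `f_b(n) = b·f_b(n-1) + n`. -/
def f (b : ℕ) : ℕ → ℕ
  | 0 => 0
  | n + 1 => b * f b n + (n + 1)

lemma fclosed (b n : ℕ) :
    ((b : ℝ) - 1) ^ 2 * (f b n : ℝ) = (b : ℝ) ^ (n + 1) - ((n : ℝ) + 1) * b + n := by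
  induction n with
  | zero => simp [f]
  | succ n ih =>
    have : (f b (n + 1) : ℝ) = b * (f b n : ℝ) + (n + 1) := by
      simp [f]
    rw [this]
    have : ((b : ℝ) - 1) ^ 2 * ((b : ℝ) * (f b n : ℝ) + (n + 1))
        = (b : ℝ) * (((b : ℝ) - 1) ^ 2 * (f b n : ℝ)) + ((b : ℝ) - 1) ^ 2 * (n + 1) := by
      ring
    rw [this, ih]
    push_cast
    ring

theorem stmt_4 (b k : ℕ) (hb : 2 ≤ b) (hk : 1 ≤ k) :
    Real.sqrt (f b (2 * k - 1))
      = ((b : ℝ) ^ k / ((b : ℝ) - 1)) *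
          Real.sqrt (1 - ((2 * (k : ℝ) - 1) * ((b : ℝ) - 1) + b) / (b : ℝ) ^ (2 * k)) := by
  have hb1 : (1 : ℝ) < (b : ℝ) := by exact_mod_cast hb.trans_lt' one_lt_two
  have hc : (0 : ℝ) < (b : ℝ) - 1 := by linarith
  have hbpos : (0 : ℝ) < (b : ℝ) := by linarith
  set X : ℝ := (b : ℝ) ^ (2 * k) - 2 * (k : ℝ) * b + (2 * (k : ℝ) - 1) with hXdef
  have h1 : 2 * k - 1 + 1 = 2 * k := by omega
  have hcf := fclosed b (2 * k - 1)
  rw [h1] at hcf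
  have hcast : ((2 * k - 1 : ℕ) : ℝ) = 2 * (k : ℝ) - 1 := by
    push_cast [Nat.cast_sub (show 1 ≤ 2 * k by omega)]; ring
  rw [hcast] at hcf
  have hcf' : ((b : ℝ) - 1) ^ 2 * (f b (2 * k - 1) : ℝ) = X := by rw [hcf]; ring
  have hX0 : 0 ≤ X := by
    rw [← hcf']
    positivity
  have hf : (f b (2 * k - 1) : ℝ) = X / ((b : ℝ) - 1) ^ 2 := by
    field_simp [← hcf']
    linear_combination hcf'
  have hbk : (0 : ℝ) < (b : ℝ) ^ (2 * k) := by positivity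
  have hinner2 : (1 : ℝ) - ((2 * (k : ℝ) - 1) * ((b : ℝ) - 1) + b) / (b : ℝ) ^ (2 * k)
      = X / (b : ℝ) ^ (2 * k) := by
    field_simp
    ring
  rw [hf, hinner2, Real.sqrt_div hX0, Real.sqrt_div hX0]
  rw [Real.sqrt_sq hc.le]
  have : Real.sqrt ((b : ℝ) ^ (2 * k)) = (b : ℝ) ^ k := by
    rw [show 2 * k = k * 2 by ring, pow_mul, Real.sqrt_sq (by positivity)]
  rw [this]
  field_simp
end

section
/- For every integer b ≥ 2 and every integer k ≥ 1, setting x_k = ((2k−1)(b−1)+b)/b^(2k), the series whose l-th term is (b^k/(b−1)) · ((∏_{i=0}^{l−1} (1/2 − i))/l!) · (−x_k)^l has sum (in the sense of HasSum over ℕ) equal to √(f_b(2k−1)). -/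
open Finset

noncomputable def cc (l : ℕ) : ℝ := (∏ i ∈ range l, ((1:ℝ)/2 - (i:ℝ))) / (Nat.factorial l : ℝ)

lemma smeval_desc (n : ℕ) (r : ℝ) :
    Polynomial.smeval (descPochhammer ℤ n) r = ∏ i ∈ range n, (r - (i:ℝ)) := by
  induction n with
  | zero => simp [descPochhammer_zero, Polynomial.smeval_one]
  | succ n ih =>
    rw [descPochhammer_succ_right, Polynomial.smeval_mul, ih, prod_range_succ,
      Polynomial.smeval_sub, Polynomial.smeval_X, Polynomial.smeval_natCast]
    simp

lemma cc_eq_choose (l : ℕ) : cc l = Ring.choose ((1:ℝ)/2) l := by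
  have h := Ring.descPochhammer_eq_factorial_smul_choose ((1:ℝ)/2) l
  rw [smeval_desc] at h
  have hf : (Nat.factorial l : ℝ) ≠ 0 := by exact_mod_cast Nat.factorial_ne_zero l
  rw [cc, h, nsmul_eq_mul]
  field_simp

lemma cc_zero : cc 0 = 1 := by simp [cc]
lemma cc_one : cc 1 = 1/2 := by simp [cc]
lemma cc_two : cc 2 = -(1/8) := by
  simp [cc, prod_range_succ]; norm_num

lemma cc_succ (l : ℕ) : cc (l+1) = cc l * (((1:ℝ)/2 - l) / (l+1)) := by
  have h1 : ((l+1).factorial : ℝ) = (l+1) * l.factorial := by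
    rw [Nat.factorial_succ]; push_cast; ring
  have hf : (Nat.factorial l : ℝ) ≠ 0 := by exact_mod_cast Nat.factorial_ne_zero l
  have hl : ((l:ℝ)+1) ≠ 0 := by positivity
  rw [cc, cc, prod_range_succ, h1]
  field_simp

lemma cc_abs_succ_le (l : ℕ) : |cc (l+1)| ≤ |cc l| := by
  rw [cc_succ, abs_mul]
  have h : |((1:ℝ)/2 - l) / (l+1)| ≤ 1 := by
    rw [abs_div, abs_of_pos (by positivity : (0:ℝ) < (l:ℝ)+1), div_le_one (by positivity)]
    rw [abs_le]; constructor <;> [nlinarith [Nat.cast_nonneg (α := ℝ) l]; nlinarith [Nat.cast_nonneg (α := ℝ) l]]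
  calc |cc l| * |((1:ℝ)/2 - l)/(l+1)| ≤ |cc l| * 1 := by
        exact mul_le_mul_of_nonneg_left h (abs_nonneg _)
    _ = |cc l| := mul_one _

lemma cc_abs_le_one : ∀ l, |cc l| ≤ 1 := by
  intro l
  induction l with
  | zero => simp [cc_zero]
  | succ n ih => exact le_trans (cc_abs_succ_le n) ih

lemma cc_abs_le_eighth : ∀ l, |cc (l+2)| ≤ 1/8 := by
  intro l
  induction l with
  | zero => rw [cc_two, abs_neg, abs_of_nonneg] <;> norm_num
  | succ n ih => exact le_trans (cc_abs_succ_le (n+2)) ih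

lemma aux_pos (t S : ℝ) (h0 : 0 ≤ t) (h1 : t ≤ 3/4)
    (hSbound : |S| ≤ (t^2/8) * (1-t)⁻¹) : 0 ≤ S + (1 + -t/2) := by
  have hSlow : -((t^2/8) * (1-t)⁻¹) ≤ S := neg_le_of_abs_le hSbound
  have hinv : (1-t)⁻¹ ≤ 4 := by
    rw [inv_le_comm₀ (by linarith) (by norm_num)]; linarith
  have hmul : (t^2/8) * (1-t)⁻¹ ≤ (t^2/8) * 4 :=
    mul_le_mul_of_nonneg_left hinv (by positivity)
  have hq : t * (3/4 - t) ≥ 0 := mul_nonneg h0 (by linarith)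
  nlinarith

lemma key {t : ℝ} (h0 : 0 ≤ t) (h1 : t ≤ 3/4) :
    HasSum (fun l => cc l * (-t) ^ l) (Real.sqrt (1 - t)) := by
  set a : ℕ → ℝ := fun l => cc l * (-t) ^ l with ha
  have hbound : ∀ l, ‖a l‖ ≤ (3/4 : ℝ) ^ l := by
    intro l
    have : ‖a l‖ = |cc l| * t ^ l := by
      rw [ha]; simp [abs_mul, abs_pow, abs_of_nonneg h0]
    rw [this]
    calc |cc l| * t ^ l ≤ 1 * (3/4:ℝ)^l := by
          apply mul_le_mul (cc_abs_le_one l) (pow_le_pow_left₀ h0 h1 l) (by positivity) zero_le_one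
      _ = (3/4:ℝ)^l := one_mul _
  have hnorm : Summable fun l => ‖a l‖ :=
    Summable.of_nonneg_of_le (fun l => norm_nonneg _) hbound
      (summable_geometric_of_lt_one (by norm_num) (by norm_num))
  have hsum : Summable a := hnorm.of_norm
  set g := ∑' l, a l with hg
  have hgsum : HasSum a g := hsum.hasSum
  -- Cauchy product: g * g = 1 - t
  have hcauchy : g * g = ∑' n, ∑ ij ∈ Finset.HasAntidiagonal.antidiagonal n, a ij.1 * a ij.2 :=
    tsum_mul_tsum_eq_tsum_sum_antidiagonal_of_summable_norm hnorm hnorm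
  have hinner : ∀ n, (∑ ij ∈ Finset.HasAntidiagonal.antidiagonal n, a ij.1 * a ij.2)
      = (Nat.choose 1 n : ℝ) * (-t) ^ n := by
    intro n
    have hv := Ring.add_choose_eq (r := (1:ℝ)/2) (s := (1:ℝ)/2) n (Commute.all _ _)
    have h12 : (1:ℝ)/2 + 1/2 = ((1:ℕ) : ℝ) := by norm_num
    rw [h12, Ring.choose_natCast] at hv
    calc (∑ ij ∈ Finset.HasAntidiagonal.antidiagonal n, a ij.1 * a ij.2)
        = ∑ ij ∈ Finset.HasAntidiagonal.antidiagonal n, (Ring.choose ((1:ℝ)/2) ij.1 * Ring.choose ((1:ℝ)/2) ij.2) * (-t)^n := by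
          apply Finset.sum_congr rfl
          intro ij hij
          have := Finset.HasAntidiagonal.mem_antidiagonal.mp hij
          rw [ha]; simp only
          rw [cc_eq_choose, cc_eq_choose, ← this, pow_add]; ring
      _ = (∑ ij ∈ Finset.HasAntidiagonal.antidiagonal n, Ring.choose ((1:ℝ)/2) ij.1 * Ring.choose ((1:ℝ)/2) ij.2) * (-t)^n := by
          rw [Finset.sum_mul]
      _ = (Nat.choose 1 n : ℝ) * (-t)^n := by rw [← hv]
  have hfin : HasSum (fun n => (Nat.choose 1 n : ℝ) * (-t) ^ n) (1 - t) := by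
    have h2 : ∀ n ∉ Finset.range 2, (Nat.choose 1 n : ℝ) * (-t) ^ n = 0 := by
      intro n hn
      have : 1 < n := by simpa using hn
      rw [Nat.choose_eq_zero_of_lt this]; simp
    have := hasSum_sum_of_ne_finset_zero (L := SummationFilter.unconditional ℕ) h2
    convert this using 1
    simp [Finset.sum_range_succ]
    ring
  have hsq : g * g = 1 - t := by
    rw [hcauchy]
    rw [tsum_congr hinner]
    exact hfin.tsum_eq
  -- positivity of g
  have hnorm2 : Summable (fun n => ‖a (n + 2)‖) := (summable_nat_add_iff 2).mpr hnorm
  have htail : Summable (fun n => a (n + 2)) := hnorm2.of_norm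
  set S := ∑' n, a (n + 2) with hS
  have hStail : HasSum (fun n => a (n+2)) S := htail.hasSum
  have hsplit : g = S + (a 0 + a 1) := by
    have := (hasSum_nat_add_iff (f := a) 2).mp hStail
    have h2 : ∑ i ∈ Finset.range 2, a i = a 0 + a 1 := by simp [Finset.sum_range_succ]
    rw [h2] at this
    exact hgsum.unique this
  have hSbound : |S| ≤ (t^2/8) * (1 - t)⁻¹ := by
    have hb2 : ∀ n, ‖a (n+2)‖ ≤ (t^2/8) * t^n := by
      intro n
      have : ‖a (n+2)‖ = |cc (n+2)| * t ^ (n+2) := by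
        rw [ha]; simp [abs_mul, abs_pow, abs_of_nonneg h0]
      rw [this]
      have := cc_abs_le_eighth n
      have htp : (0:ℝ) ≤ t ^ (n+2) := by positivity
      calc |cc (n+2)| * t^(n+2) ≤ (1/8) * t^(n+2) := mul_le_mul_of_nonneg_right ‹|cc (n+2)| ≤ 1/8› htp
        _ = (t^2/8) * t^n := by ring
    have hgeo : HasSum (fun n => (t^2/8) * t^n) ((t^2/8) * (1-t)⁻¹) := by
      have : HasSum (fun n => t^n) (1-t)⁻¹ := hasSum_geometric_of_lt_one h0 (by linarith)
      exact this.mul_left _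
    calc |S| ≤ ∑' n, ‖a (n+2)‖ := by
          rw [hS]; exact (norm_tsum_le_tsum_norm hnorm2)
      _ ≤ ∑' n, (t^2/8) * t^n := by
          apply Summable.tsum_le_tsum hb2 hnorm2 hgeo.summable
      _ = (t^2/8) * (1-t)⁻¹ := hgeo.tsum_eq
  have ha0 : a 0 = 1 := by rw [ha]; simp [cc_zero]
  have ha1 : a 1 = -t/2 := by rw [ha]; simp [cc_one]; ring
  have hgpos : 0 ≤ g := by
    rw [hsplit, ha0, ha1]
    exact aux_pos t S h0 h1 hSbound
  have : g = Real.sqrt (1 - t) := by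
    rw [← hsq]; exact (Real.sqrt_mul_self hgpos).symm
  rw [← this]; exact hgsum

lemma f_closed (b : ℕ) : ∀ n : ℕ, ((b:ℝ)-1)^2 * (f b n) = (b:ℝ)^(n+1) - b - n*((b:ℝ)-1) := by
  intro n
  induction n with
  | zero => simp [f]
  | succ n ih =>
    show ((b:ℝ)-1)^2 * ((b * f b n + (n+1) : ℕ) : ℝ) = _
    push_cast
    push_cast at ih
    linear_combination (b:ℝ) * ih

lemma t_le (b m : ℕ) (hb : 2 ≤ b) :
    ∀ m : ℕ, 4*((2*(m:ℝ)+1)*((b:ℝ)-1)+b) ≤ 3*(b:ℝ)^(2*(m+1)) := by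
  have hbR : (2:ℝ) ≤ b := by exact_mod_cast hb
  intro m
  induction m with
  | zero => norm_num; nlinarith
  | succ n ih =>
    have hpow : (4:ℝ) ≤ (b:ℝ)^(2*(n+1)) := by
      calc (4:ℝ) = 2^2 := by norm_num
        _ ≤ (b:ℝ)^2 := by nlinarith
        _ ≤ (b:ℝ)^(2*(n+1)) := pow_le_pow_right₀ (by linarith) (by omega)
    have hexp : 2*(n+1+1) = 2*(n+1) + 2 := by ring
    rw [hexp, pow_add]
    push_cast
    push_cast at ih
    nlinarith [ih, hpow, hbR,
      mul_nonneg (by linarith : (0:ℝ) ≤ (b:ℝ)^(2*(n+1)) - 4) (by nlinarith : (0:ℝ) ≤ (b:ℝ)^2 - 1),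
      mul_nonneg (by linarith : (0:ℝ) ≤ (b:ℝ)) (by linarith : (0:ℝ) ≤ (b:ℝ) - 1)]


theorem stmt_5 (b k : ℕ) (hb : 2 ≤ b) (hk : 1 ≤ k) :
    HasSum
      (fun l : ℕ =>
        ((b : ℝ) ^ k / ((b : ℝ) - 1)) *
          ((∏ i ∈ Finset.range l, ((1 : ℝ) / 2 - (i : ℝ))) / (Nat.factorial l : ℝ)) *
          (-(((2 * (k : ℝ) - 1) * ((b : ℝ) - 1) + b) / (b : ℝ) ^ (2 * k))) ^ l)
      (Real.sqrt (f b (2 * k - 1))) := by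
  obtain ⟨m, rfl⟩ : ∃ m, k = m + 1 := ⟨k - 1, by omega⟩
  have hbR : (2:ℝ) ≤ (b:ℝ) := by exact_mod_cast hb
  have hb1 : ((b:ℝ) - 1) ≠ 0 := by linarith
  have hbpos : (0:ℝ) < (b:ℝ) := by linarith
  set T : ℝ := ((2 * ((m+1 : ℕ) : ℝ) - 1) * ((b : ℝ) - 1) + b) / (b : ℝ) ^ (2 * (m+1)) with hT
  have hcast : (2 * ((m+1 : ℕ) : ℝ) - 1) = 2 * (m:ℝ) + 1 := by push_cast; ring
  have hpowpos : (0:ℝ) < (b:ℝ) ^ (2*(m+1)) := by positivity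
  have hT0 : 0 ≤ T := by
    rw [hT, hcast]
    apply div_nonneg _ (le_of_lt hpowpos)
    nlinarith [Nat.cast_nonneg (α := ℝ) m]
  have hT1 : T ≤ 3/4 := by
    rw [hT, hcast, div_le_iff₀ hpowpos]
    have := t_le b 0 hb m
    linarith
  have hkey := (key hT0 hT1).mul_left ((b:ℝ)^(m+1) / ((b:ℝ) - 1))
  have hfun : (fun l : ℕ =>
        ((b : ℝ) ^ (m+1) / ((b : ℝ) - 1)) *
          ((∏ i ∈ Finset.range l, ((1 : ℝ) / 2 - (i : ℝ))) / (Nat.factorial l : ℝ)) *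
          (-(((2 * ((m+1 : ℕ) : ℝ) - 1) * ((b : ℝ) - 1) + b) / (b : ℝ) ^ (2 * (m+1)))) ^ l)
      = fun l : ℕ => ((b:ℝ)^(m+1) / ((b:ℝ) - 1)) * (cc l * (-T) ^ l) := by
    funext l
    rw [cc, hT]
    ring
  rw [hfun]
  have hval : Real.sqrt (f b (2 * (m + 1) - 1)) = (b:ℝ)^(m+1) / ((b:ℝ) - 1) * Real.sqrt (1 - T) := ?_
  · rw [hval]; exact hkey
  -- value equality: sqrt (f b (2(m+1)-1)) = B * sqrt (1 - T)
  have h2 : 2 * (m+1) - 1 = 2*m+1 := by omega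
  rw [h2]
  have hf := f_closed b (2*m+1)
  have e1 : (2*m+1) + 1 = 2*(m+1) := by ring
  rw [e1] at hf
  set B : ℝ := (b:ℝ)^(m+1) / ((b:ℝ) - 1) with hB
  have hB0 : 0 ≤ B := by
    rw [hB]; apply div_nonneg (by positivity) (by linarith)
  have hFB : ((f b (2*m+1) : ℕ) : ℝ) = B^2 * (1 - T) := by
    rw [hB, hT, hcast]
    have hpow2 : ((b:ℝ)^(m+1))^2 = (b:ℝ)^(2*(m+1)) := by rw [← pow_mul]; ring_nf
    field_simp
    push_cast at hf ⊢
    linear_combination ((b:ℝ)^(2*(m+1))) * hf +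
      ((b:ℝ)^(2*(m+1)) - ((2*(m:ℝ)+1)*((b:ℝ)-1)+(b:ℝ))) * hpow2
  rw [hFB, Real.sqrt_mul (sq_nonneg B), Real.sqrt_sq hB0]
end

section
/- For every integer b ≥ 2 and every integer k ≥ 1, the integer part of √(f_b(2k−1)) is the base-b repunit with k ones: ⌊√(f_b(2k−1))⌋ = (b^k − 1)/(b − 1). -/
lemma f_cast (b n : ℕ) : (f b (n+1) : ℤ) = b * f b n + (n+1) := by
  push_cast [f]; ring

lemma lemA (b : ℕ) (n : ℕ) :
    ((b:ℤ) - 1) * (f b n) + (n+1) = ∑ i ∈ Finset.range (n+1), (b:ℤ)^i := by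
  induction n with
  | zero => simp [f]
  | succ n ih =>
    rw [geom_sum_succ, ← ih, f_cast]
    push_cast
    ring

lemma lemB (b : ℕ) (m : ℕ) :
    (f b (2*m+1) : ℤ) = (∑ i ∈ Finset.range (m+1), (b:ℤ)^i)^2 + 2 * f b m := by
  induction m with
  | zero => simp [f]
  | succ m ih =>
    have h1 : 2*(m+1)+1 = (2*m+1)+1+1 := by ring
    rw [h1, f_cast, f_cast, ih, f_cast]
    have hA := lemA b m
    simp only [geom_sum_succ] at hA ⊢
    push_cast

    linear_combination 2*(b:ℤ)*hA

theorem stmt_6 (b k : ℕ) (hb : 2 ≤ b) (hk : 1 ≤ k) :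
    ⌊Real.sqrt (f b (2 * k - 1))⌋ = ((b : ℤ) ^ k - 1) / ((b : ℤ) - 1) := by
  obtain ⟨m, rfl⟩ : ∃ m, k = m + 1 := ⟨k - 1, by omega⟩
  have hk2 : 2 * (m+1) - 1 = 2*m+1 := by omega
  rw [hk2]
  set S : ℤ := ∑ i ∈ Finset.range (m+1), (b:ℤ)^i with hS
  have hb1 : (1:ℤ) ≤ (b:ℤ) - 1 := by
    have : (2:ℤ) ≤ b := by exact_mod_cast hb
    linarith
  have hRHS : ((b : ℤ) ^ (m+1) - 1) / ((b : ℤ) - 1) = S := by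
    rw [← geom_sum_mul]
    exact Int.mul_ediv_cancel _ (by linarith)
  rw [hRHS]
  have hA := lemA b m
  have hB := lemB b m
  have hfm : (0:ℤ) ≤ (f b m : ℤ) := by positivity
  have hfm2 : (f b m : ℤ) ≤ S - 1 := by
    have : (f b m : ℤ) ≤ ((b:ℤ) - 1) * f b m := by nlinarith

    have hm1 : (0:ℤ) ≤ (m:ℤ) := Int.ofNat_nonneg m
    linarith
  have hSpos : (1:ℤ) ≤ S := by linarith
  have hlow : S^2 ≤ (f b (2*m+1) : ℤ) := by rw [hB]; nlinarith
  have hhigh : (f b (2*m+1) : ℤ) < (S+1)^2 := by rw [hB]; nlinarith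
  have hS0 : (0:ℝ) ≤ (S:ℝ) := by exact_mod_cast (by linarith : (0:ℤ) ≤ S)
  rw [Int.floor_eq_iff]
  constructor
  · rw [show ((S:ℝ)) = Real.sqrt ((S:ℝ)^2) by
      rw [Real.sqrt_sq hS0]]
    apply Real.sqrt_le_sqrt
    have := hlow

    exact_mod_cast this
  · have h1 : Real.sqrt ((f b (2*m+1) : ℕ) : ℝ) < Real.sqrt (((S:ℝ)+1)^2) := by
      apply Real.sqrt_lt_sqrt (by positivity)
      exact_mod_cast hhigh
    rwa [Real.sqrt_sq (by linarith : (0:ℝ) ≤ (S:ℝ)+1)] at h1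
end

section
/- For every integer b ≥ 2 and every integer k ≥ 2, the natural number f_b(2k−1) is not a perfect square, and hence the real number √(f_b(2k−1)) is irrational. -/
def g (b : ℕ) : ℕ → ℕ
  | 0 => 0
  | k + 1 => b * g b k + 1

lemma lg (b k : ℕ) : b ^ k + g b k = b * g b k + 1 := by
  induction k with
  | zero => simp [g]
  | succ k ih =>
    calc b ^ (k + 1) + g b (k + 1) = b * (b ^ k + g b k) + 1 := by
          simp [g, pow_succ]; ring
      _ = b * (b * g b k + 1) + 1 := by rw [ih]
      _ = b * g b (k + 1) + 1 := by simp [g]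

lemma lfg (b n : ℕ) : f b (n + 1) = f b n + g b (n + 1) := by
  induction n with
  | zero => simp [f, g]
  | succ n ih =>
    show b * f b (n + 1) + (n + 2) = f b (n + 1) + (b * g b (n + 1) + 1)
    calc b * f b (n + 1) + (n + 2) = b * (f b n + g b (n + 1)) + (n + 2) := by rw [ih]
      _ = (b * f b n + (n + 1)) + (b * g b (n + 1) + 1) := by ring
      _ = f b (n + 1) + (b * g b (n + 1) + 1) := rfl

lemma l1 (b : ℕ) (hb : 2 ≤ b) (n : ℕ) : f b n + n + 2 ≤ b ^ (n + 1) := by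
  induction n with
  | zero => simpa [f] using hb
  | succ n ih =>
    show b * f b n + (n + 1) + (n + 1) + 2 ≤ b ^ (n + 2)
    have h2 : b * (f b n + n + 2) ≤ b * b ^ (n + 1) := Nat.mul_le_mul_left b ih
    have h3 : 2 * (f b n + n + 2) ≤ b * (f b n + n + 2) :=
      Nat.mul_le_mul_right _ hb
    calc b * f b n + (n + 1) + (n + 1) + 2 ≤ b * (f b n + n + 2) := by nlinarith
      _ ≤ b * b ^ (n + 1) := h2
      _ = b ^ (n + 2) := by ring

lemma main_id (b m : ℕ) :
    f b (2 * m + 3) + 2 * b ^ (m + 1) =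
      g b (m + 2) ^ 2 + 2 * g b (m + 2) + 2 * f b m := by
  induction m with
  | zero => simp [f, g]; ring
  | succ m ih =>
    have h5 : 2 * (m + 1) + 3 = (2 * m + 3) + 1 + 1 := by ring
    rw [h5]
    show b * (b * f b (2*m+3) + (2*m+3+1)) + (2*m+3+1+1) + 2 * b ^ (m + 2) =
      (b * g b (m+2) + 1) ^ 2 + 2 * (b * g b (m+2) + 1) + 2 * (b * f b m + (m+1))
    have hlg := lg b (m + 2)
    have hlfg := lfg b m
    have hlg1 := lg b (m + 1)
    zify at ih hlg hlfg hlg1 ⊢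
    have e1 : (b:ℤ) ^ (m+2) = b * b ^ (m+1) := by ring
    have e2 : (b:ℤ) ^ (m+1) = b * g b (m+1) + 1 - g b (m+1) := by linarith
    have e3 : (g b (m+2) : ℤ) = b * g b (m+1) + 1 := by
      have : g b (m+2) = b * g b (m+1) + 1 := rfl
      rw [this]; push_cast; ring
    have hlfg2 : (b:ℤ) * f b m + (m+1) = f b m + g b (m+1) := by
      have h0 : f b (m+1) = b * f b m + (m+1) := rfl
      rw [h0] at hlfg; push_cast at hlfg ⊢; linarith
    linear_combination (b:ℤ)^2 * ih + (2*b - 2*b^2) * e2 + (2*b^2 - 4*b) * e3 + 2*b*hlfg2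

lemma sandwich (b k : ℕ) (hb : 2 ≤ b) (hk : 2 ≤ k) :
    g b k ^ 2 < f b (2 * k - 1) ∧ f b (2 * k - 1) < (g b k + 1) ^ 2 := by
  obtain ⟨m, rfl⟩ : ∃ m, k = m + 2 := ⟨k - 2, by omega⟩
  have h1 : 2 * (m + 2) - 1 = 2 * m + 3 := by omega
  rw [h1]
  have hid := main_id b m
  have hlg := lg b (m + 1)
  have hg1 : 1 ≤ g b (m + 1) := by
    cases m with
    | zero => simp [g]
    | succ n => simp [g]
  have hgm2 : g b (m + 2) = b * g b (m + 1) + 1 := rfl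
  have hbp : b ^ (m + 1) + 1 ≤ g b (m + 2) := by
    -- b^(m+1) = b*g(m+1)+1 - g(m+1) ≤ b*g(m+1) = g(m+2)-1
    omega
  have hfm : f b m ≤ b ^ (m + 1) := by
    have := l1 b hb m
    omega
  constructor
  · -- lower bound
    nlinarith [hid, hbp]
  · -- upper bound: f = g^2 + 2g + 2 f m - 2 b^(m+1) < g^2 + 2g + 1
    nlinarith [hid, hfm]

theorem stmt_7 (b k : ℕ) (hb : 2 ≤ b) (hk : 2 ≤ k) :
    (¬ ∃ m : ℕ, f b (2 * k - 1) = m ^ 2) ∧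
      Irrational (Real.sqrt (f b (2 * k - 1))) := by
  obtain ⟨hlo, hhi⟩ := sandwich b k hb hk
  have hns : ¬ ∃ m : ℕ, f b (2 * k - 1) = m ^ 2 := by
    rintro ⟨m, hm⟩
    rw [hm] at hlo hhi
    have h1 : g b k < m := by
      by_contra h
      push_neg at h
      exact absurd (Nat.pow_le_pow_left h 2) (by omega)
    have h2 : m < g b k + 1 := by
      by_contra h
      push_neg at h
      exact absurd (Nat.pow_le_pow_left h 2) (by omega)
    omega
  refine ⟨hns, ?_⟩
  rw [irrational_sqrt_natCast_iff]
  rintro ⟨r, hr⟩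
  exact hns ⟨r, by rw [hr]; ring⟩
end

section
/- For every integer b ≥ 2 and every integer k ≥ 1, writing B = b^k/(b−1) and x_k = ((2k−1)(b−1)+b)/b^(2k), the first-order Taylor truncation satisfies 0 ≤ B·(1 − x_k/2) − √(f_b(2k−1)) ≤ B·x_k²/2. -/
lemma taylor_sqrt (x : ℝ) (hx0 : 0 ≤ x) (hx1 : x ≤ 1) :
    1 - x/2 - x^2/2 ≤ Real.sqrt (1-x) ∧ Real.sqrt (1-x) ≤ 1 - x/2 := by
  have h1x : (0:ℝ) ≤ 1 - x := by linarith
  have ht0 : 0 ≤ Real.sqrt (1-x) := Real.sqrt_nonneg _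
  have ht2 : Real.sqrt (1-x) ^ 2 = 1 - x := Real.sq_sqrt h1x
  set t := Real.sqrt (1-x)
  constructor
  · rcases le_or_gt (1 - x/2 - x^2/2) 0 with h | h
    · linarith
    · nlinarith [sq_nonneg x, mul_nonneg (mul_nonneg hx0 hx0) hx0,
        mul_nonneg (sq_nonneg x) (sub_nonneg.mpr hx1)]
  · nlinarith [sq_nonneg (t - (1 - x/2)), sq_nonneg (t + (1 - x/2))]

lemma fR (b n : ℕ) : ((b:ℝ)-1)^2 * (f b n) = (b:ℝ)^(n+1) - ((n:ℝ)+1)*b + n := by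
  induction n with
  | zero => simp [f]
  | succ n ih =>
    have h : ((f b (n+1) : ℕ) : ℝ) = (b:ℝ) * (f b n) + ((n:ℝ)+1) := by
      show ((b * f b n + (n+1) : ℕ) : ℝ) = _
      push_cast; ring
    have h2 : ((b:ℝ)-1)^2 * (f b (n+1))
        = (b:ℝ) * (((b:ℝ)-1)^2 * (f b n)) + ((n:ℝ)+1)*((b:ℝ)-1)^2 := by
      rw [h]; ring
    rw [h2, ih]; push_cast; ring

theorem stmt_9 (b k : ℕ) (hb : 2 ≤ b) (hk : 1 ≤ k) :
    0 ≤ ((b : ℝ) ^ k / ((b : ℝ) - 1)) *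
          (1 - (((2 * (k : ℝ) - 1) * ((b : ℝ) - 1) + b) / (b : ℝ) ^ (2 * k)) / 2)
        - Real.sqrt (f b (2 * k - 1)) ∧
      ((b : ℝ) ^ k / ((b : ℝ) - 1)) *
          (1 - (((2 * (k : ℝ) - 1) * ((b : ℝ) - 1) + b) / (b : ℝ) ^ (2 * k)) / 2)
        - Real.sqrt (f b (2 * k - 1))
        ≤ ((b : ℝ) ^ k / ((b : ℝ) - 1)) *
            (((2 * (k : ℝ) - 1) * ((b : ℝ) - 1) + b) / (b : ℝ) ^ (2 * k)) ^ 2 / 2 := by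
  have hb2 : (2:ℝ) ≤ (b:ℝ) := by exact_mod_cast hb
  have hk1 : (1:ℝ) ≤ (k:ℝ) := by exact_mod_cast hk
  have hDpos : (0:ℝ) < (b:ℝ) - 1 := by linarith
  have hbpos : (0:ℝ) < (b:ℝ) := by linarith
  have hPpos : (0:ℝ) < (b:ℝ)^(2*k) := pow_pos hbpos _
  have hBkpos : (0:ℝ) < (b:ℝ)^k := pow_pos hbpos _
  set B : ℝ := (b:ℝ)^k / ((b:ℝ)-1) with hBdef
  set x : ℝ := ((2 * (k:ℝ) - 1) * ((b:ℝ) - 1) + (b:ℝ)) / (b:ℝ)^(2*k) with hxdef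
  have hBpos : 0 < B := div_pos hBkpos hDpos
  -- closed form for f
  have hn : 2*k - 1 + 1 = 2*k := by omega
  have hcast : ((2*k-1 : ℕ) : ℝ) = 2*(k:ℝ) - 1 := by
    have : (2*k-1 : ℕ) = 2*k - 1 := rfl
    rw [Nat.cast_sub (by omega)]; push_cast; ring
  have hf : ((b:ℝ)-1)^2 * (f b (2*k-1))
      = (b:ℝ)^(2*k) - 2*(k:ℝ)*(b:ℝ) + (2*(k:ℝ)-1) := by
    have := fR b (2*k-1)
    rw [hn, hcast] at this
    rw [this]; ring
  -- x ∈ [0,1]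
  have hnum_nonneg : (0:ℝ) ≤ (2 * (k:ℝ) - 1) * ((b:ℝ) - 1) + (b:ℝ) := by nlinarith
  have hx0 : 0 ≤ x := div_nonneg hnum_nonneg hPpos.le
  have hbern : 1 + (k:ℝ) * ((b:ℝ)^2 - 1) ≤ ((b:ℝ)^2)^k := by
    have h := one_add_mul_le_pow (a := (b:ℝ)^2 - 1) (by nlinarith) k
    simpa using h
  have hP2 : (b:ℝ)^(2*k) = ((b:ℝ)^2)^k := by rw [← pow_mul]
  have hnum_le : (2 * (k:ℝ) - 1) * ((b:ℝ) - 1) + (b:ℝ) ≤ (b:ℝ)^(2*k) := by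
    rw [hP2]; nlinarith
  have hx1 : x ≤ 1 := by
    rw [hxdef, div_le_one hPpos]; exact hnum_le
  -- f = B^2 * (1 - x)
  have hB2 : B^2 = (b:ℝ)^(2*k) / ((b:ℝ)-1)^2 := by
    rw [hBdef, div_pow, ← pow_mul, mul_comm k 2]
  have hfB : ((f b (2*k-1) : ℕ) : ℝ) = B^2 * (1 - x) := by
    rw [hB2, hxdef]
    field_simp
    nlinarith [hf]
  -- sqrt
  have h1x : (0:ℝ) ≤ 1 - x := by linarith
  set t : ℝ := Real.sqrt (1 - x) with htdef
  have ht0 : 0 ≤ t := Real.sqrt_nonneg _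
  have ht2 : t^2 = 1 - x := Real.sq_sqrt h1x
  have hs : Real.sqrt ((f b (2*k-1) : ℕ) : ℝ) = B * t := by
    rw [hfB, Real.sqrt_mul (sq_nonneg B), Real.sqrt_sq hBpos.le]
  have hsub : (2 * k - 1 : ℕ) = 2*k - 1 := rfl
  rw [hs]
  obtain ⟨hlow, hup⟩ := taylor_sqrt x hx0 hx1
  rw [← htdef] at hlow hup
  have h1 := mul_le_mul_of_nonneg_left hup hBpos.le
  have h2 := mul_le_mul_of_nonneg_left hlow hBpos.le
  constructor
  · linarith
  · ring_nf at h2 ⊢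
    linarith
end

section
/- Let b ≥ 2, q ≥ 0, r ≥ 0 be integers with 2^q dividing b^r, and let a ≥ 0 be an integer. Set x = a/((b−1)·2^q) as a real number. Then for every integer i ≥ r, the i-th base-b digit of x, namely ⌊b^(i+1)·x⌋ − b·⌊b^i·x⌋, is equal to (a·b^r/2^q) mod (b−1); in particular all base-b digits of x from position r onward are equal to one another. -/
/-- The `i`-th base-`b` digit (after the radix point) of a nonnegative real `x`. -/
noncomputable def digit (b : ℕ) (x : ℝ) (i : ℕ) : ℤ :=
  ⌊(b : ℝ) ^ (i + 1) * x⌋ - b * ⌊(b : ℝ) ^ i * x⌋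

lemma floor_cast_div_real (n : ℤ) (d : ℕ) : ⌊((n : ℝ) / (d : ℝ))⌋ = n / d := by
  rw [← Rat.floor_intCast_div_natCast n d, ← Rat.floor_cast (α := ℝ)]
  push_cast
  rfl

theorem stmt_11 (b q r a : ℕ) (hb : 2 ≤ b) (hdvd : 2 ^ q ∣ b ^ r) :
    (∀ i : ℕ, r ≤ i →
        digit b ((a : ℝ) / (((b : ℝ) - 1) * 2 ^ q)) i
          = ((a * b ^ r / 2 ^ q : ℕ) : ℤ) % ((b : ℤ) - 1)) ∧
      ∀ i j : ℕ, r ≤ i → r ≤ j →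
        digit b ((a : ℝ) / (((b : ℝ) - 1) * 2 ^ q)) i
          = digit b ((a : ℝ) / (((b : ℝ) - 1) * 2 ^ q)) j := by
  have hb1 : (1 : ℝ) < (b : ℝ) := by exact_mod_cast lt_of_lt_of_le one_lt_two hb
  have hbne : ((b : ℝ) - 1) ≠ 0 := by linarith
  have h2ne : ((2 : ℝ) ^ q) ≠ 0 := by positivity
  have main : ∀ i : ℕ, r ≤ i →
      digit b ((a : ℝ) / (((b : ℝ) - 1) * 2 ^ q)) i
        = ((a * b ^ r / 2 ^ q : ℕ) : ℤ) % ((b : ℤ) - 1) := by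
    intro i hi
    set d : ℕ := a * b ^ r / 2 ^ q with hd
    have hdvd' : 2 ^ q ∣ a * b ^ r := Dvd.dvd.mul_left hdvd a
    have hd2 : d * 2 ^ q = a * b ^ r := Nat.div_mul_cancel hdvd'
    set c : ℕ := d * b ^ (i - r) with hc
    have hc2 : c * 2 ^ q = a * b ^ i := by
      have : b ^ r * b ^ (i - r) = b ^ i := by
        rw [← pow_add, Nat.add_sub_cancel' hi]
      calc c * 2 ^ q = d * 2 ^ q * b ^ (i - r) := by ring
        _ = a * (b ^ r * b ^ (i - r)) := by rw [hd2]; ring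
        _ = a * b ^ i := by rw [this]
    have hxi : (b : ℝ) ^ i * ((a : ℝ) / (((b : ℝ) - 1) * 2 ^ q))
        = ((c : ℤ) : ℝ) / (((b - 1 : ℕ) : ℝ)) := by
      have hcast : ((b - 1 : ℕ) : ℝ) = (b : ℝ) - 1 := by
        have : (1 : ℕ) ≤ b := by omega
        push_cast [this]; ring
      have key : (c : ℝ) * 2 ^ q = (a : ℝ) * (b : ℝ) ^ i := by exact_mod_cast hc2
      rw [hcast]
      push_cast
      field_simp
      linear_combination (-1 : ℝ) * key
    have hxi1 : (b : ℝ) ^ (i + 1) * ((a : ℝ) / (((b : ℝ) - 1) * 2 ^ q))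
        = (((b * c : ℕ) : ℤ) : ℝ) / (((b - 1 : ℕ) : ℝ)) := by
      rw [pow_succ]
      push_cast
      rw [show (b:ℝ)^i * (b:ℝ) * ((a : ℝ) / (((b : ℝ) - 1) * 2 ^ q))
            = (b:ℝ) * ((b:ℝ)^i * ((a : ℝ) / (((b : ℝ) - 1) * 2 ^ q))) by ring, hxi]
      push_cast
      ring
    unfold digit
    rw [hxi, hxi1, floor_cast_div_real, floor_cast_div_real]
    have hbz : ((b - 1 : ℕ) : ℤ) = (b : ℤ) - 1 := by omega
    rw [hbz]
    push_cast
    set m : ℤ := (b : ℤ) - 1 with hm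
    have hm0 : m ≠ 0 := by omega
    have hbc : (b : ℤ) * (c : ℤ) = (c : ℤ) + m * (c : ℤ) := by rw [hm]; ring
    rw [hbc, Int.add_mul_ediv_left _ _ hm0]
    have hmod : (c : ℤ) % m = (d : ℤ) % m := by
      have hbm : (b : ℤ) ≡ 1 [ZMOD m] := Int.modEq_iff_dvd.mpr ⟨-1, by rw [hm]; ring⟩
      have hpow : (b : ℤ) ^ (i - r) ≡ 1 [ZMOD m] := by
        simpa using hbm.pow (i - r)
      have hcd : (c : ℤ) = (d : ℤ) * (b : ℤ) ^ (i - r) := by push_cast [hc]; ring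
      have : (c : ℤ) ≡ (d : ℤ) [ZMOD m] := by
        rw [hcd]
        simpa using (Int.ModEq.refl (d : ℤ)).mul hpow
      exact this
    have hb' : (b : ℤ) = m + 1 := by rw [hm]; ring
    have h1 : (c : ℤ) / m + (c : ℤ) - (m + 1) * ((c : ℤ) / m)
        = (c : ℤ) - m * ((c : ℤ) / m) := by ring
    rw [hb', h1, ← Int.emod_def, hmod]
  exact ⟨main, fun i j hi hj => by rw [main i hi, main j hj]⟩
end
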